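/- (Nonlinear eigenvalue correction, simple eigenvalue case.) Let X be a complex Banach space, U ⊆ ℂ open, and T_h(λ), T_0(λ) compact-operator-valued analytic functions on U with T_h(λ) → T_0(λ) in operator norm uniformly for λ ∈ U, at rate c(h) → 0. Let λ_0 ∈ U, λ_0 ≠ 0, be a simple nonlinear eigenvalue of T_0 (so 1/λ_0 is a simple eigenvalue of T_0(λ_0)), with normalized eigenfunction φ and dual eigenfunction φ* (⟨φ, φ*⟩ = 1). Suppose λ_h are simple nonlinear eigenvalues of T_h with λ_h → λ_0 as h → 0, and suppose λ_0²⟨DT_0(λ_0)φ, φ*⟩ ≠ −1. Then λ_h = λ_0 + λ_0²⟨(T_0(λ_0) − T_h(λ_0))φ, φ*⟩ / (1 + λ_0²⟨DT_0(λ_0)φ, φ*⟩) + O(c(h)²). -/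

import Mathlib

/-!
Write `F₀(z) = z • T₀(z)` and `F_h(z) = z • T_h(z)`, so that nonlinear eigenpairs solve
`F(λ) u = u`. Let `u_h` be a unit eigenvector of `F_h(λ_h)`, `Δ = λ_h - λ₀`,
`E_h = F_h(λ₀) - F₀(λ₀)` and `G = F₀'(λ₀)`. Taylor expansion of `F₀`, together with the Schwarz
lemma for the holomorphic function `F_h - F₀` (bounded by `O(c(h))`), gives
`(1 - F₀(λ₀)) u_h = Δ • G u_h + E_h u_h + O(|Δ| (|Δ| + c(h)))`.
By the Fredholm alternative `1 - F₀(λ₀)` is bounded below on `ker φ*`, so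
`w_h = u_h - φ*(u_h) • φ` is `O(|Δ| + c(h))`. Applying `φ*`, which kills the range of
`1 - F₀(λ₀)`, yields `Δ φ*(Gφ) + φ*(E_h φ) = O((|Δ| + c(h))²)`. Since `φ*(Gφ) ≠ 0`, this first
forces `Δ = O(c(h))` and then `Δ = -φ*(E_h φ) / φ*(Gφ) + O(c(h)²)`, which is the stated formula
because `λ₀ φ*(Gφ) = 1 + λ₀² φ*(T₀'(λ₀) φ)`.
-/

open Set Filter Topology Asymptotics Metric

theorem IsCompactOperator.exists_norm_le_mul_norm_sub_apply {𝕜 E : Type*}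
    [NontriviallyNormedField 𝕜] [NormedAddCommGroup E] [NormedSpace 𝕜 E] {A : E →L[𝕜] E}
    (hA : IsCompactOperator A) {V : Submodule 𝕜 E} (hV : IsClosed (V : Set E))
    (hmaps : ∀ x ∈ V, A x ∈ V) (hfix : ∀ x ∈ V, A x = x → x = 0) :
    ∃ K : ℝ, ∀ x ∈ V, ‖x‖ ≤ K * ‖x - A x‖ := by
  have hnot : ¬ Module.End.HasEigenvalue (A.restrict hmaps : Module.End 𝕜 V) 1 := fun h => by
    obtain ⟨x, hx⟩ := h.exists_hasEigenvector
    exact hx.2 (Subtype.ext (hfix x x.2 (by simpa using congrArg Subtype.val hx.apply_eq_smul)))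
  obtain ⟨K, hK⟩ := ((hA.comp_clm V.subtypeL).codRestrict _ hV).antilipschitz_of_not_hasEigenvalue
    one_ne_zero hnot
  exact ⟨K, fun x hx => by simpa [norm_sub_rev] using hK.le_mul_norm (map_zero _) ⟨x, hx⟩⟩

theorem isBigO_sub_sub_smul_deriv {E : Type*} [NormedAddCommGroup E] [NormedSpace ℂ E]
    [CompleteSpace E] {f : ℂ → E} {s : Set ℂ} {c : ℂ} (hs : s ∈ 𝓝 c)
    (hf : DifferentiableOn ℂ f s) :
    (fun z => f z - f c - (z - c) • deriv f c) =O[𝓝 c] fun z => (z - c) ^ 2 := by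
  have hslope : (fun z => dslope f c z - dslope f c c) =O[𝓝 c] fun z => z - c :=
    (((Complex.differentiableOn_dslope hs).2 hf).differentiableAt hs).isBigO_sub
  refine ((isBigO_refl (fun z => z - c) _).smul hslope).congr (fun z => ?_) (fun z => by ring)
  rw [smul_sub, sub_smul_dslope, dslope_same]

theorem Complex.norm_sub_le_of_forall_norm_le {E : Type*} [NormedAddCommGroup E]
    [NormedSpace ℂ E] {f : ℂ → E} {c z : ℂ} {R M : ℝ} (hd : DifferentiableOn ℂ f (ball c R))
    (hM : ∀ w ∈ ball c R, ‖f w‖ ≤ M) (hz : z ∈ ball c R) :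
    ‖f z - f c‖ ≤ 2 * M / R * ‖z - c‖ := by
  have hc : c ∈ ball c R := mem_ball_self (pos_of_mem_ball hz)
  have hmaps : MapsTo f (ball c R) (closedBall (f c) (2 * M)) := fun w hw => by
    rw [mem_closedBall, dist_eq_norm]
    linarith [norm_sub_le (f w) (f c), hM w hw, hM c hc]
  simpa [dist_eq_norm] using dist_le_div_mul_dist_of_mapsTo_ball hd hmaps hz

theorem isBigO_of_isBigO_add_sq {ι E F : Type*} [NormedAddCommGroup E] [NormedAddCommGroup F]
    {l : Filter ι} {f : ι → E} {g : ι → F} (hf : Tendsto f l (𝓝 0)) (hg : Tendsto g l (𝓝 0))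
    (h : f =O[l] fun i => ‖g i‖ + (‖f i‖ + ‖g i‖) ^ 2) : f =O[l] g := by
  obtain ⟨C, hC, hCf⟩ := h.exists_pos
  have hsmall : ∀ᶠ i in l, C * (‖f i‖ + ‖g i‖) ≤ 1 / 2 := by
    have := ((hf.norm.add hg.norm).const_mul C)
    simp only [norm_zero, add_zero, mul_zero] at this
    exact this.eventually (ge_mem_nhds (by norm_num))
  refine IsBigO.of_bound (2 * C + 1) ((hCf.bound.and hsmall).mono fun i ⟨hi, hCi⟩ => ?_)
  rw [Real.norm_of_nonneg (by positivity)] at hi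
  nlinarith [norm_nonneg (f i), norm_nonneg (g i)]

theorem exists_eventually_norm_eq_one_apply_eq {𝕜 E ι : Type*} [RCLike 𝕜] [NormedAddCommGroup E]
    [NormedSpace 𝕜 E] {l : Filter ι} {A : ι → E →L[𝕜] E}
    (h : ∀ᶠ i in l, ∃ u, u ≠ 0 ∧ A i u = u) :
    ∃ u : ι → E, ∀ᶠ i in l, ‖u i‖ = 1 ∧ A i (u i) = u i := by
  have (i : ι) : ∃ v : E, (∃ u, u ≠ 0 ∧ A i u = u) → ‖v‖ = 1 ∧ A i v = v := by
    by_cases hi : ∃ u, u ≠ 0 ∧ A i u = u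
    · obtain ⟨u, hu0, hu⟩ := hi
      exact ⟨(‖u‖⁻¹ : 𝕜) • u, fun _ => ⟨norm_smul_inv_norm hu0, by rw [map_smul, hu]⟩⟩
    · exact ⟨0, fun h' => absurd h' hi⟩
  choose u hu using this
  exact ⟨u, h.mono hu⟩

theorem exists_forall_Ioo_norm_le_of_isBigO {E F : Type*} [Norm E] [SeminormedAddCommGroup F]
    {f : ℝ → E} {g : ℝ → F} {a : ℝ} (h : f =O[𝓝[>] a] g) :
    ∃ C > 0, ∃ b > a, ∀ x ∈ Ioo a b, ‖f x‖ ≤ C * ‖g x‖ := by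
  obtain ⟨C, hC, hCf⟩ := h.exists_pos
  obtain ⟨b, hb, hsub⟩ := mem_nhdsGT_iff_exists_Ioo_subset.1 hCf.bound
  exact ⟨C, hC, b, hb, hsub⟩

theorem Asymptotics.IsBigO.clm_apply {ι 𝕜 E F : Type*} [NontriviallyNormedField 𝕜]
    [NormedAddCommGroup E] [NormedSpace 𝕜 E] [NormedAddCommGroup F] [NormedSpace 𝕜 F]
    {l : Filter ι} {A : ι → E →L[𝕜] F} {v : ι → E} {g g' : ι → ℝ} (hA : A =O[l] g)
    (hv : v =O[l] g') : (fun i => A i (v i)) =O[l] fun i => g i * g' i :=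
  isBoundedBilinearMap_apply.isBigO_comp.trans (hA.norm_left.mul hv.norm_left)

section Perturbation

variable {X ι : Type*} [NormedAddCommGroup X] [NormedSpace ℂ X] {l : Filter ι}
  {F0 : ℂ → X →L[ℂ] X} {F : ι → ℂ → X →L[ℂ] X} {lam : ι → ℂ} {u : ι → X} {ε : ι → ℝ}
  {lam0 : ℂ} {R : ℝ} {φ : X} {φstar : X →L[ℂ] ℂ}

theorem isBigO_eigenvector_remainder [CompleteSpace X] (hR : 0 < R)
    (hF0 : DifferentiableOn ℂ F0 (ball lam0 R))
    (hF : ∀ᶠ i in l, DifferentiableOn ℂ (fun z => F i z - F0 z) (ball lam0 R) ∧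
      ∀ z ∈ ball lam0 R, ‖F i z - F0 z‖ ≤ ε i)
    (hlam : Tendsto lam l (𝓝 lam0)) (hu : ∀ᶠ i in l, ‖u i‖ = 1 ∧ F i (lam i) (u i) = u i) :
    (fun i => u i - F0 lam0 (u i) - (lam i - lam0) • deriv F0 lam0 (u i)
        - (F i lam0 - F0 lam0) (u i)) =O[l]
      fun i => ‖lam i - lam0‖ * (‖lam i - lam0‖ + ‖ε i‖) := by
  have hTaylor : (fun i => F0 (lam i) - F0 lam0 - (lam i - lam0) • deriv F0 lam0) =O[l]
      fun i => ‖lam i - lam0‖ * (‖lam i - lam0‖ + ‖ε i‖) :=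
    ((isBigO_sub_sub_smul_deriv (ball_mem_nhds lam0 hR) hF0).comp_tendsto hlam).trans
      (isBigO_of_le _ fun i => by
        simp only [Function.comp_apply, norm_mul, norm_norm, sq]
        rw [Real.norm_of_nonneg (by positivity)]
        gcongr
        exact le_add_of_nonneg_right (norm_nonneg (ε i)))
  have hSchwarz : (fun i => (F i (lam i) - F0 (lam i)) - (F i lam0 - F0 lam0)) =O[l]
      fun i => ‖lam i - lam0‖ * (‖lam i - lam0‖ + ‖ε i‖) := by
    refine IsBigO.of_bound (2 / R) ((hF.and (hlam (ball_mem_nhds lam0 hR))).mono ?_)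
    rintro i ⟨⟨hd, hb⟩, hi⟩
    refine (Complex.norm_sub_le_of_forall_norm_le hd hb hi).trans ?_
    rw [Real.norm_of_nonneg (by positivity)]
    calc 2 * ε i / R * ‖lam i - lam0‖ = 2 / R * (‖lam i - lam0‖ * ε i) := by ring
      _ ≤ 2 / R * (‖lam i - lam0‖ * (‖lam i - lam0‖ + ‖ε i‖)) := by
        gcongr
        linarith [Real.le_norm_self (ε i), norm_nonneg (lam i - lam0)]
  refine ((hTaylor.add hSchwarz).clm_apply (v := u) (g' := fun _ => 1) ?_).congr' ?_ (by simp)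
  · exact IsBigO.of_bound' (hu.mono fun i hi => by simp [hi.1])
  · filter_upwards [hu] with i hi
    simp only [add_apply, sub_apply, smul_apply]
    linear_combination (norm := module) hi.2

theorem isBigO_sub_smul_eigenvector (hcpt : IsCompactOperator (F0 lam0))
    (heig : F0 lam0 φ = φ) (hnorm : φstar φ = 1) (hadj : ∀ x, φstar (F0 lam0 x) = φstar x)
    (hgeom : ∀ x, F0 lam0 x = x → ∃ a : ℂ, x = a • φ) {g : ι → ℝ}
    (hu : (fun i => u i - F0 lam0 (u i)) =O[l] g) :
    (fun i => u i - φstar (u i) • φ) =O[l] g := by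
  obtain ⟨K, hK⟩ := hcpt.exists_norm_le_mul_norm_sub_apply (V := φstar.ker)
    φstar.isClosed_ker (fun x hx => by simpa [hadj] using hx) fun x hx hfix => by
      obtain ⟨a, rfl⟩ := hgeom x hfix
      simp_all
  refine (isBigO_of_le' (c := K) _ fun i => ?_).trans hu
  have hw : u i - φstar (u i) • φ - F0 lam0 (u i - φstar (u i) • φ) = u i - F0 lam0 (u i) := by
    rw [map_sub, map_smul, heig]
    abel
  simpa only [hw] using hK (u i - φstar (u i) • φ) (by simp [hnorm])

theorem eigencomponent_mul_eq {A : X →L[ℂ] X} (hadj : ∀ x, φstar (A x) = φstar x)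
    (Δ : ℂ) (G E : X →L[ℂ] X) (v : X) :
    φstar v * (Δ * φstar (G φ) + φstar (E φ)) =
      -(Δ * φstar (G (v - φstar v • φ)) + φstar (E (v - φstar v • φ))
        + φstar (v - A v - Δ • G v - E v)) := by
  simp only [map_sub, map_smul, hadj, smul_eq_mul]
  ring

-- `‖u‖ = 1` and `u - φ*(u) • φ → 0` keep `‖φ*(u)‖ ‖φ‖ ≥ 1/2` eventually.
theorem isBigO_of_eigencomponent_mul {Y : ι → ℂ} {g : ι → ℝ} (hu : ∀ᶠ i in l, ‖u i‖ = 1)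
    (hw : Tendsto (fun i => u i - φstar (u i) • φ) l (𝓝 0))
    (h : (fun i => φstar (u i) * Y i) =O[l] g) : Y =O[l] g := by
  refine IsBigO.trans (IsBigO.of_bound (2 * ‖φ‖) ?_) h
  filter_upwards [hu, hw.norm.eventually (ge_mem_nhds (by norm_num : ‖(0 : X)‖ < 1 / 2))]
    with i hui hwi
  have : 1 ≤ ‖φstar (u i)‖ * ‖φ‖ + ‖u i - φstar (u i) • φ‖ := by
    rw [← hui, ← norm_smul]
    exact norm_le_norm_add_norm_sub' (u i) _
  rw [norm_mul]
  nlinarith [norm_nonneg (Y i), norm_nonneg (φstar (u i))]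

theorem isBigO_eigenvalue_sub_add_div [CompleteSpace X] (hR : 0 < R)
    (hF0 : DifferentiableOn ℂ F0 (ball lam0 R)) (hcpt : IsCompactOperator (F0 lam0))
    (heig : F0 lam0 φ = φ) (hnorm : φstar φ = 1) (hadj : ∀ x, φstar (F0 lam0 x) = φstar x)
    (hgeom : ∀ x, F0 lam0 x = x → ∃ a : ℂ, x = a • φ) (hκ : φstar (deriv F0 lam0 φ) ≠ 0)
    (hF : ∀ᶠ i in l, DifferentiableOn ℂ (fun z => F i z - F0 z) (ball lam0 R) ∧
      ∀ z ∈ ball lam0 R, ‖F i z - F0 z‖ ≤ ε i)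
    (hε : Tendsto ε l (𝓝 0)) (hlam : Tendsto lam l (𝓝 lam0))
    (heigh : ∀ᶠ i in l, ∃ u, u ≠ 0 ∧ F i (lam i) u = u) :
    (fun i => lam i - lam0 + φstar ((F i lam0 - F0 lam0) φ) / φstar (deriv F0 lam0 φ)) =O[l]
      fun i => ε i ^ 2 := by
  obtain ⟨u, hu⟩ := exists_eventually_norm_eq_one_apply_eq heigh
  have hρ := isBigO_eigenvector_remainder hR hF0 hF hlam hu
  set G := deriv F0 lam0
  set E := fun i => F i lam0 - F0 lam0
  set s := fun i => ‖lam i - lam0‖ + ‖ε i‖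
  have hΔ0 : Tendsto (fun i => lam i - lam0) l (𝓝 0) := by simpa using hlam.sub_const lam0
  have hs : Tendsto s l (𝓝 0) := by simpa [s] using hΔ0.norm.add hε.norm
  have hΔs : (fun i => lam i - lam0) =O[l] s :=
    IsBigO.of_norm_le fun i => le_add_of_nonneg_right (norm_nonneg _)
  have hεs : ε =O[l] s := IsBigO.of_norm_le fun i => le_add_of_nonneg_left (norm_nonneg _)
  have hE : E =O[l] ε := IsBigO.of_bound 1 <| hF.mono fun i hi => by
    simpa using (hi.2 lam0 (mem_ball_self hR)).trans (Real.le_norm_self _)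
  have hu1 : u =O[l] fun _ => (1 : ℝ) := IsBigO.of_bound' (hu.mono fun i hi => by simp [hi.1])
  have hρs : _ =O[l] s :=
    (hρ.trans ((hΔ0.isBigO_one ℝ).norm_left.mul (isBigO_refl s l))).congr_right fun i => one_mul _
  have hBu : (fun i => u i - F0 lam0 (u i)) =O[l] s := by
    refine ((hρs.add (((hΔs.smul ((G.isBigO_comp u l).trans hu1)).congr_right fun i => ?_))).add
      (((hE.clm_apply hu1).congr_right fun i => mul_one _).trans hεs)).congr_left fun i => ?_
    · simp
    · simp only [E]
      abel
  have hw := isBigO_sub_smul_eigenvector hcpt heig hnorm hadj hgeom hBu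
  have hX : (fun i => (lam i - lam0) * φstar (G φ) + φstar (E i φ)) =O[l] fun i => s i ^ 2 := by
    refine isBigO_of_eigencomponent_mul (hu.mono fun i hi => hi.1) (hw.trans_tendsto hs) ?_
    simp only [eigencomponent_mul_eq hadj]
    refine ((((hΔs.mul ((φstar.comp G).isBigO_comp _ l |>.trans hw)).add
      ((φstar.isBigO_comp _ l).trans ((hE.clm_apply hw).trans (hεs.mul (isBigO_refl s l))))).add
      ((φstar.isBigO_comp _ l).trans (hρ.trans (hΔs.norm_left.mul (isBigO_refl s l))))).neg_left
      |>.congr_right fun i => (sq _).symm)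
  have hΔε : (fun i => lam i - lam0) =O[l] ε := by
    have hEφ : (fun i => φstar (E i φ)) =O[l] ε :=
      (φstar.isBigO_comp _ l).trans ((ContinuousLinearMap.apply ℂ X φ).isBigO_comp E l |>.trans hE)
    have hε_le : ε =O[l] fun i => ‖ε i‖ + s i ^ 2 := isBigO_of_le _ fun i =>
      (le_add_of_nonneg_right (by positivity)).trans (Real.le_norm_self _)
    have hs_le : (fun i => s i ^ 2) =O[l] fun i => ‖ε i‖ + s i ^ 2 := isBigO_of_le _ fun i => by
      rw [Real.norm_of_nonneg (by positivity), Real.norm_of_nonneg (by positivity)]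
      exact le_add_of_nonneg_left (norm_nonneg _)
    refine isBigO_of_isBigO_add_sq hΔ0 hε ?_
    refine (((hX.trans hs_le).sub (hEφ.trans hε_le)).const_mul_left (φstar (G φ))⁻¹).congr_left
      fun i => ?_
    field_simp
    ring
  have hsε : s =O[l] ε := hΔε.norm_left.add (isBigO_refl ε l).norm_left
  refine ((hX.trans (hsε.pow 2)).const_mul_left (φstar (G φ))⁻¹).congr_left fun i => ?_
  field_simp
  ring

theorem isBigO_eigenvalue_sub_correction_of_smul [CompleteSpace X] {T0 : ℂ → X →L[ℂ] X}
    {T : ι → ℂ → X →L[ℂ] X} {c : ι → ℝ} (hR : 0 < R) (hT0 : DifferentiableOn ℂ T0 (ball lam0 R))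
    (hcpt : IsCompactOperator (T0 lam0)) (heig : lam0 • T0 lam0 φ = φ) (hnorm : φstar φ = 1)
    (hadj : ∀ x, φstar (lam0 • T0 lam0 x) = φstar x)
    (hgeom : ∀ x, lam0 • T0 lam0 x = x → ∃ a : ℂ, x = a • φ)
    (hcond : lam0 ^ 2 * φstar (deriv T0 lam0 φ) ≠ -1)
    (hT : ∀ᶠ i in l, DifferentiableOn ℂ (T i) (ball lam0 R) ∧
      ∀ z ∈ ball lam0 R, ‖T i z - T0 z‖ ≤ c i)
    (hc : Tendsto c l (𝓝 0)) (hlam : Tendsto lam l (𝓝 lam0))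
    (heigh : ∀ᶠ i in l, ∃ u, u ≠ 0 ∧ lam i • T i (lam i) u = u) :
    (fun i => lam i - (lam0 + lam0 ^ 2 * φstar ((T0 lam0 - T i lam0) φ) /
      (1 + lam0 ^ 2 * φstar (deriv T0 lam0 φ)))) =O[l] fun i => c i ^ 2 := by
  have hT0' : DifferentiableOn ℂ (fun z => z • T0 z) (ball lam0 R) := differentiableOn_id.smul hT0
  have hκ : lam0 * φstar (deriv (fun z => z • T0 z) lam0 φ) =
      1 + lam0 ^ 2 * φstar (deriv T0 lam0 φ) := by
    have hderiv : deriv (fun z => z • T0 z) lam0 = lam0 • deriv T0 lam0 + (1 : ℂ) • T0 lam0 :=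
      ((hasDerivAt_id' lam0).smul (hT0.differentiableAt (ball_mem_nhds _ hR)).hasDerivAt).deriv
    rw [hderiv]
    have := hadj φ
    simp only [map_smul, hnorm, smul_eq_mul] at this
    simp only [one_smul, add_apply, smul_apply, map_add, map_smul, smul_eq_mul]
    linear_combination this
  have hκ0 : lam0 * φstar (deriv (fun z => z • T0 z) lam0 φ) ≠ 0 := by
    rw [hκ]
    exact fun h => hcond (by linear_combination h)
  have hF : ∀ᶠ i in l, DifferentiableOn ℂ (fun z => z • T i z - z • T0 z) (ball lam0 R) ∧
      ∀ z ∈ ball lam0 R, ‖z • T i z - z • T0 z‖ ≤ (‖lam0‖ + R) * c i := by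
    filter_upwards [hT] with i ⟨hd, hb⟩
    refine ⟨(differentiableOn_id.smul hd).sub hT0', fun z hz => ?_⟩
    rw [← smul_sub, norm_smul]
    have hz' : ‖z‖ ≤ ‖lam0‖ + R := by
      linarith [norm_le_norm_add_norm_sub' z lam0, mem_ball_iff_norm.1 hz]
    exact mul_le_mul hz' (hb z hz) (norm_nonneg _) (by positivity)
  have key := isBigO_eigenvalue_sub_add_div hR hT0' (hcpt.smul lam0) (by simpa using heig) hnorm
    (by simpa using hadj) (by simpa using hgeom) (right_ne_zero_of_mul hκ0) hF
    (by simpa using hc.const_mul (‖lam0‖ + R)) hlam heigh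
  refine (key.trans ((isBigO_const_mul_self ((‖lam0‖ + R) ^ 2) _ l).congr_left fun i => by ring))
    |>.congr_left fun i => ?_
  rw [← hκ]
  have := left_ne_zero_of_mul hκ0
  have := right_ne_zero_of_mul hκ0
  simp only [sub_apply, smul_apply, map_sub, map_smul, smul_eq_mul]
  field_simp
  ring

end Perturbation

theorem nonlinear_eigenvalue_correction_simple_general
    {X : Type*} [NormedAddCommGroup X] [NormedSpace ℂ X] [CompleteSpace X]
    (U : Set ℂ) (hU : IsOpen U)
    (T : ℝ → ℂ → (X →L[ℂ] X)) (T0 : ℂ → (X →L[ℂ] X))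
    (hanal : ∀ h > (0:ℝ), DifferentiableOn ℂ (T h) U)
    (hanal0 : DifferentiableOn ℂ T0 U)
    (hcpt0 : ∀ lam ∈ U, IsCompactOperator ⇑(T0 lam))
    -- uniform convergence rate c(h) → 0
    (c : ℝ → ℝ) (hc0 : Tendsto c (nhdsWithin 0 (Ioi 0)) (nhds 0))
    (hcbound : ∀ h > (0:ℝ), ∀ lam ∈ U, ‖T h lam - T0 lam‖ ≤ c h)
    -- λ0 is a simple nonlinear eigenvalue of T0 with eigenpair (φ, φ*)
    (lam0 : ℂ) (hlam0U : lam0 ∈ U)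
    (φ : X) (heig : lam0 • T0 lam0 φ = φ)
    (φstar : X →L[ℂ] ℂ) (hnorm : φstar φ = 1)
    (hadj : ∀ x : X, φstar (lam0 • T0 lam0 x) = φstar x)
    -- algebraic simplicity: geometric eigenspace is spanned by φ, no generalized vectors
    (hgeom : ∀ u : X, lam0 • T0 lam0 u = u → ∃ a : ℂ, u = a • φ)
    -- the perturbed simple nonlinear eigenvalues λ_h → λ_0
    (lamh : ℝ → ℂ) (h1 : ℝ) (hh1 : 0 < h1)
    (heigh : ∀ h ∈ Ioo (0:ℝ) h1, lamh h ∈ U ∧ ∃ u : X, u ≠ 0 ∧ lamh h • T h (lamh h) u = u)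
    (hlim : Tendsto lamh (nhdsWithin 0 (Ioi 0)) (nhds lam0))
    -- the nondegeneracy condition λ0²⟨DT0(λ0)φ, φ*⟩ ≠ −1
    (hcond : lam0 ^ 2 * φstar (deriv T0 lam0 φ) ≠ -1) :
    ∃ C > (0:ℝ), ∃ h0 > (0:ℝ), ∀ h ∈ Ioo (0:ℝ) h0,
      ‖lamh h - (lam0 +
          lam0 ^ 2 * φstar ((T0 lam0 - T h lam0) φ) /
            (1 + lam0 ^ 2 * φstar (deriv T0 lam0 φ)))‖ ≤ C * (c h) ^ 2 := by
  obtain ⟨R, hR, hRU⟩ := Metric.isOpen_iff.1 hU lam0 hlam0U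
  have hT : ∀ᶠ h in 𝓝[>] 0, DifferentiableOn ℂ (T h) (ball lam0 R) ∧
      ∀ z ∈ ball lam0 R, ‖T h z - T0 z‖ ≤ c h :=
    eventually_of_mem self_mem_nhdsWithin fun h hh =>
      ⟨(hanal h hh).mono hRU, fun z hz => hcbound h hh z (hRU hz)⟩
  obtain ⟨C, hC, h0, hh0, hbound⟩ := exists_forall_Ioo_norm_le_of_isBigO <|
    isBigO_eigenvalue_sub_correction_of_smul hR (hanal0.mono hRU) (hcpt0 lam0 hlam0U) heig hnorm
      hadj hgeom hcond hT hc0 hlim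
      (eventually_of_mem (Ioo_mem_nhdsGT hh1) fun h hh => (heigh h hh).2)
  exact ⟨C, hC, h0, hh0, fun h hh => by simpa using hbound h hh⟩

/-- Nonlinear eigenvalue correction formula for a simple nonlinear eigenvalue:
`λ_h = λ_0 + λ_0²⟨(T_0(λ_0) − T_h(λ_0))φ, φ*⟩ / (1 + λ_0²⟨DT_0(λ_0)φ, φ*⟩) + O(c(h)²)`. -/
theorem nonlinear_eigenvalue_correction_simple
    {X : Type*} [NormedAddCommGroup X] [NormedSpace ℂ X] [CompleteSpace X]
    (U : Set ℂ) (hU : IsOpen U)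
    (T : ℝ → ℂ → (X →L[ℂ] X)) (T0 : ℂ → (X →L[ℂ] X))
    (hanal : ∀ h > (0:ℝ), DifferentiableOn ℂ (T h) U)
    (hanal0 : DifferentiableOn ℂ T0 U)
    (hcpt : ∀ h > (0:ℝ), ∀ lam ∈ U, IsCompactOperator ⇑(T h lam))
    (hcpt0 : ∀ lam ∈ U, IsCompactOperator ⇑(T0 lam))
    -- uniform convergence rate c(h) → 0
    (c : ℝ → ℝ) (hc0 : Tendsto c (nhdsWithin 0 (Ioi 0)) (nhds 0))
    (hcbound : ∀ h > (0:ℝ), ∀ lam ∈ U, ‖T h lam - T0 lam‖ ≤ c h)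
    -- λ0 is a simple nonlinear eigenvalue of T0 with eigenpair (φ, φ*)
    (lam0 : ℂ) (hlam0U : lam0 ∈ U) (hlam0 : lam0 ≠ 0)
    (φ : X) (hφ : φ ≠ 0) (heig : lam0 • T0 lam0 φ = φ)
    (φstar : X →L[ℂ] ℂ) (hnorm : φstar φ = 1)
    (hadj : ∀ x : X, φstar (lam0 • T0 lam0 x) = φstar x)
    -- algebraic simplicity: geometric eigenspace is spanned by φ, no generalized vectors
    (hgeom : ∀ u : X, lam0 • T0 lam0 u = u → ∃ a : ℂ, u = a • φ)
    (halg : ∀ u : X,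
      (((1 : X →L[ℂ] X) - lam0 • T0 lam0) ∘L ((1 : X →L[ℂ] X) - lam0 • T0 lam0)) u = 0 →
      ((1 : X →L[ℂ] X) - lam0 • T0 lam0) u = 0)
    -- the perturbed simple nonlinear eigenvalues λ_h → λ_0
    (lamh : ℝ → ℂ) (h1 : ℝ) (hh1 : 0 < h1)
    (heigh : ∀ h ∈ Ioo (0:ℝ) h1, lamh h ∈ U ∧ ∃ u : X, u ≠ 0 ∧ lamh h • T h (lamh h) u = u)
    (hlim : Tendsto lamh (nhdsWithin 0 (Ioi 0)) (nhds lam0))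
    -- the nondegeneracy condition λ0²⟨DT0(λ0)φ, φ*⟩ ≠ −1
    (hcond : lam0 ^ 2 * φstar (deriv T0 lam0 φ) ≠ -1) :
    ∃ C > (0:ℝ), ∃ h0 > (0:ℝ), ∀ h ∈ Ioo (0:ℝ) h0,
      ‖lamh h - (lam0 +
          lam0 ^ 2 * φstar ((T0 lam0 - T h lam0) φ) /
            (1 + lam0 ^ 2 * φstar (deriv T0 lam0 φ)))‖ ≤ C * (c h) ^ 2 :=
  nonlinear_eigenvalue_correction_simple_general U hU T T0 hanal hanal0 hcpt0 c hc0 hcbound lam0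
    hlam0U φ heig φstar hnorm hadj hgeom lamh h1 hh1 heigh hlim hcond
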